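/- Let (h_t)_{t∈ℕ} and (g_t)_{t∈ℕ} be sequences of nonnegative real numbers such that Σ_{t=0}^∞ g_t = ∞, Σ_{t=0}^∞ g_t h_t < ∞, and there exists a constant K ≥ 0 with |h_{t+1} − h_t| ≤ K g_t for all t. Then h_t → 0 as t → ∞. -/

import Mathlib

/-!
If `h` did not tend to `0`, it would exceed some `ε` infinitely often, while `∑ g = ∞` and
`∑ g h < ∞` force it below `ε / 2` infinitely often as well. Each descent from `ε` to `ε / 2`
takes `g`-mass at least `ε / (2K)`, because the increments of `h` are at most `K g`, and along
it `h ≥ ε / 2`; so it contributes at least `ε² / (4K)` to `∑ g h`. A descent starting where the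
tails of `∑ g h` are already smaller than that is impossible.
-/

open Filter Finset

theorem frequently_lt_of_summable_mul {g h : ℕ → ℝ} (hg : ∀ t, 0 ≤ g t) (hg_not : ¬Summable g)
    (hgh : Summable fun t => g t * h t) {ε : ℝ} (hε : 0 < ε) : ∃ᶠ t in atTop, h t < ε := by
  by_contra hcon
  simp only [not_frequently, not_lt] at hcon
  refine hg_not <| (hgh.mul_left ε⁻¹).of_norm_bounded_eventually_nat ?_
  filter_upwards [hcon] with t ht
  rw [Real.norm_of_nonneg (hg t), le_inv_mul_iff₀ hε, mul_comm]
  exact mul_le_mul_of_nonneg_left ht (hg t)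

theorem sum_Ico_le_tsum_nat_add {f : ℕ → ℝ} (hf : ∀ t, 0 ≤ f t) (hsum : Summable f) (s u : ℕ) :
    ∑ t ∈ Ico s u, f t ≤ ∑' k, f (k + s) := by
  rw [sum_Ico_eq_sum_range]
  simp_rw [add_comm s]
  exact ((summable_nat_add_iff s).2 hsum).sum_le_tsum _ fun k _ => hf (k + s)

theorem exists_gt_lt_and_forall_Ico_le {α : Type*} [LinearOrder α] {h : ℕ → α} {a : α} {s : ℕ}
    (hs : a ≤ h s) (hfreq : ∃ᶠ t in atTop, h t < a) :
    ∃ u, s < u ∧ h u < a ∧ ∀ t ∈ Ico s u, a ≤ h t := by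
  classical
  have hex : ∃ u, s < u ∧ h u < a := frequently_atTop.1 hfreq (s + 1)
  refine ⟨Nat.find hex, (Nat.find_spec hex).1, (Nat.find_spec hex).2, fun t ht => ?_⟩
  obtain ⟨hst, htu⟩ := mem_Ico.1 ht
  rcases hst.eq_or_lt with rfl | hst
  · exact hs
  · exact not_lt.1 fun hlt => Nat.find_min hex htu ⟨hst, hlt⟩

theorem sub_le_mul_sum_Ico_of_abs_sub_le {h g : ℕ → ℝ} {K : ℝ}
    (hinc : ∀ t, |h (t + 1) - h t| ≤ K * g t) {s u : ℕ} (hsu : s ≤ u) :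
    h s - h u ≤ K * ∑ t ∈ Ico s u, g t := by
  have hdist : dist (h s) (h u) ≤ ∑ t ∈ Ico s u, K * g t :=
    dist_le_Ico_sum_of_dist_le hsu fun {t} _ _ => by rw [Real.dist_eq, abs_sub_comm]; exact hinc t
  rw [mul_sum]
  exact (le_abs_self _).trans hdist

theorem mul_sub_le_mul_sum_Ico_mul {h g : ℕ → ℝ} {K a b : ℝ} (hg : ∀ t, 0 ≤ g t) (hK : 0 ≤ K)
    (hinc : ∀ t, |h (t + 1) - h t| ≤ K * g t) (ha : 0 ≤ a) {s u : ℕ} (hsu : s ≤ u)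
    (hs : b ≤ h s) (hu : h u < a) (hmid : ∀ t ∈ Ico s u, a ≤ h t) :
    a * (b - a) ≤ K * ∑ t ∈ Ico s u, g t * h t := by
  have hdrop : b - a ≤ K * ∑ t ∈ Ico s u, g t := by
    linarith [sub_le_mul_sum_Ico_of_abs_sub_le hinc hsu]
  have hweight : a * ∑ t ∈ Ico s u, g t ≤ ∑ t ∈ Ico s u, g t * h t := by
    rw [mul_sum]
    refine sum_le_sum fun t ht => ?_
    rw [mul_comm]
    exact mul_le_mul_of_nonneg_left (hmid t ht) (hg t)
  calc a * (b - a) ≤ a * (K * ∑ t ∈ Ico s u, g t) := mul_le_mul_of_nonneg_left hdrop ha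
    _ = K * (a * ∑ t ∈ Ico s u, g t) := by ring
    _ ≤ K * ∑ t ∈ Ico s u, g t * h t := mul_le_mul_of_nonneg_left hweight hK

/-- **Deterministic lemma used in the proof of Theorem 3.3.**
Let `(h t)` and `(g t)` be nonnegative real sequences with `∑ t, g t = ∞` (the partial
sums tend to infinity), `∑ t, g t * h t < ∞`, and suppose there is a constant `K ≥ 0`
with `|h (t+1) − h t| ≤ K * g t` for all `t`. Then `h t → 0` as `t → ∞`. -/
theorem summable_weighted_with_controlled_increments_tendsto_zero
    (h g : ℕ → ℝ)
    (hh : ∀ t, 0 ≤ h t) (hg : ∀ t, 0 ≤ g t)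
    (hgdiv : Tendsto (fun n => ∑ t ∈ Finset.range n, g t) atTop atTop)
    (hgh : Summable fun t => g t * h t)
    (K : ℝ) (hK : 0 ≤ K)
    (hinc : ∀ t, |h (t + 1) - h t| ≤ K * g t) :
    Tendsto h atTop (nhds 0) := by
  have hg_not : ¬Summable g := (not_summable_iff_tendsto_nat_atTop_of_nonneg hg).2 hgdiv
  have hgh_nonneg : ∀ t, 0 ≤ g t * h t := fun t => mul_nonneg (hg t) (hh t)
  refine tendsto_order.2 ⟨fun a ha => Eventually.of_forall fun t => ha.trans_le (hh t), ?_⟩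
  intro ε hε
  by_contra hcon
  have hup : ∃ᶠ t in atTop, ε ≤ h t := by simpa only [not_eventually, not_lt] using hcon
  have htail : ∀ᶠ s in atTop, K * ∑' k, g (k + s) * h (k + s) < ε / 2 * (ε - ε / 2) :=
    ((tendsto_sum_nat_add fun t => g t * h t).const_mul K).eventually
      (gt_mem_nhds (by rw [mul_zero]; nlinarith))
  obtain ⟨s, hs, hs_tail⟩ := (hup.and_eventually htail).exists
  obtain ⟨u, hsu, hu, hmid⟩ :=
    exists_gt_lt_and_forall_Ico_le (hs.trans' (by linarith))
      (frequently_lt_of_summable_mul hg hg_not hgh (half_pos hε))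
  have hcost := mul_sub_le_mul_sum_Ico_mul hg hK hinc (half_pos hε).le hsu.le hs hu hmid
  have hchunk := mul_le_mul_of_nonneg_left (sum_Ico_le_tsum_nat_add hgh_nonneg hgh s u) hK
  linarith
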